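/- Let ⟨T, ⪯, i⟩ be an LCS poset of height δ with associated space X(T). Then X(T) is scattered and for every α < δ the α-th Cantor–Bendixson level of X(T) equals T_α. -/

import Mathlib

/-!
Write `C(y)` for the cone `{z | z ⪯ y}`. Each `C(x)` is open, and since `s ≺ t` forces
`π(s) < π(t)`, the cone `C(x)` meets the points of level `≥ π(x)` only in `x`: so a point of
minimal level in any set is isolated in it (scatteredness), and every point of level `α` is
isolated among the points of level `≥ α`. Conversely, the infimum function shows that every
neighbourhood of `z` contains some `C(z) \ (C(v₁) ∪ … ∪ C(vₙ))` with `vᵢ ≺ z`; for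
`β < π(z)` above `α` and all `π(vᵢ)`, the infinitely many predecessors of `z` on level `β`
cannot all be among the `vᵢ`, so `z` is not isolated among the points of level `≥ α` once
`π(z) > α`. By induction on `α`, the `α`-th Cantor–Bendixson level is then exactly `T_α`.
-/

/-- An LCS poset on `T = ⋃_{α<δ} {α} × A_α` with infimum function `i`. -/
structure LCSPoset (δ : Ordinal.{0}) where
  /-- the levels -/
  A : Ordinal.{0} → Set Ordinal.{0}
  hA : ∀ α, α < δ → (A α).Nonempty
  /-- the partial order -/
  le : Ordinal.{0} × Ordinal.{0} → Ordinal.{0} × Ordinal.{0} → Prop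
  le_refl : ∀ s, le s s
  le_trans : ∀ s t u, le s t → le t u → le s u
  le_antisymm : ∀ s t, le s t → le t s → s = t
  /-- `s ≺ t` implies `π(s) < π(t)` -/
  pi_lt : ∀ s t, le s t → s ≠ t → s.1 < t.1
  /-- each point has infinitely many strict predecessors on each lower level -/
  many_below : ∀ α β, α < β → β < δ → ∀ t : Ordinal.{0} × Ordinal.{0},
    t.1 = β → t.2 ∈ A t.1 →
    {s : Ordinal.{0} × Ordinal.{0} |
      s.1 = α ∧ s.2 ∈ A s.1 ∧ le s t ∧ s ≠ t}.Infinite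
  /-- the infimum function -/
  infl : Ordinal.{0} × Ordinal.{0} → Ordinal.{0} × Ordinal.{0} →
    Finset (Ordinal.{0} × Ordinal.{0})
  infl_le : ∀ s t v, v ∈ infl s t → le v s ∧ le v t
  infl_ub : ∀ s t u, le u s → le u t → ∃ v ∈ infl s t, le u v

/-- The underlying set of the LCS poset. -/
def LCSPoset.carrier {δ : Ordinal.{0}} (P : LCSPoset δ) : Set (Ordinal.{0} × Ordinal.{0}) :=
  {p | p.1 < δ ∧ p.2 ∈ P.A p.1}

/-- The underlying type of the associated space. -/
def LCSPoset.space {δ : Ordinal.{0}} (P : LCSPoset δ) : Type 1 :=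
  {p : Ordinal.{0} × Ordinal.{0} // p ∈ P.carrier}

/-- The topology generated by the basic sets `C(x) \ (C(x₁) ∪ … ∪ C(x_n))`. -/
noncomputable def LCSPoset.topology {δ : Ordinal.{0}} (P : LCSPoset δ) :
    TopologicalSpace P.space :=
  TopologicalSpace.generateFrom
    {S | ∃ (x : P.space) (F : Finset (Ordinal.{0} × Ordinal.{0})),
      (∀ y ∈ F, P.le y x.1 ∧ y ≠ x.1) ∧
      S = {z : P.space | P.le z.1 x.1} \ ⋃ y ∈ F, {z : P.space | P.le z.1 y}}


/-- The `o`-th Cantor–Bendixson level. -/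
noncomputable def CBLevel (X : Type*) [TopologicalSpace X] : Ordinal.{0} → Set X
  | o =>
    {x | x ∉ (⋃ β : Set.Iio o, CBLevel X β.1) ∧
      ∃ U : Set X, IsOpen U ∧ U ∩ (⋃ β : Set.Iio o, CBLevel X β.1)ᶜ = {x}}
  termination_by o => o
  decreasing_by all_goals exact β.2

namespace LCSPoset

variable {δ : Ordinal.{0}} (P : LCSPoset δ)

attribute [local instance] LCSPoset.topology

def cone (y : Ordinal.{0} × Ordinal.{0}) : Set P.space :=
  {z | P.le z.1 y}

variable {P}

lemma isOpen_cone (x : P.space) : IsOpen (P.cone x.1) := by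
  apply TopologicalSpace.isOpen_generateFrom_of_mem
  exact ⟨x, ∅, by simp, by simp [cone]⟩

lemma eq_of_le_of_fst_le {s t : Ordinal.{0} × Ordinal.{0}} (hst : P.le s t) (hts : t.1 ≤ s.1) :
    s = t := by
  by_contra hne
  exact (P.pi_lt s t hst hne).not_ge hts

lemma cone_inter_eq_singleton {S : Set P.space} {x : P.space} (hx : x ∈ S)
    (hmin : ∀ w ∈ S, x.1.1 ≤ w.1.1) : P.cone x.1 ∩ S = {x} := by
  ext w
  refine ⟨fun hw => Subtype.ext (eq_of_le_of_fst_le hw.1 (hmin w hw.2)), ?_⟩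
  rintro rfl
  exact ⟨P.le_refl _, hx⟩

lemma exists_cone_diff_subset {U : Set P.space} (hU : IsOpen U) {z : P.space} (hz : z ∈ U) :
    ∃ F : Finset (Ordinal.{0} × Ordinal.{0}), (∀ v ∈ F, P.le v z.1 ∧ v ≠ z.1) ∧
      P.cone z.1 \ ⋃ v ∈ F, P.cone v ⊆ U := by
  induction hU with
  | basic S hS =>
    obtain ⟨x, F, -, rfl⟩ := hS
    obtain ⟨hzx, hzF⟩ := hz
    simp only [Set.mem_iUnion, not_exists] at hzF
    -- the infima of `z` with the removed points `y ∈ F` are the points to remove below `z`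
    refine ⟨F.biUnion (P.infl z.1), fun v hv => ?_, ?_⟩
    · obtain ⟨y, hy, hvy⟩ := Finset.mem_biUnion.1 hv
      obtain ⟨hvz, hvy⟩ := P.infl_le z.1 y v hvy
      exact ⟨hvz, by rintro rfl; exact hzF y hy hvy⟩
    · rintro w ⟨hwz, hwF⟩
      refine ⟨P.le_trans _ _ _ hwz hzx, ?_⟩
      simp only [Set.mem_iUnion, not_exists, Finset.mem_biUnion] at hwF ⊢
      intro y hy hwy
      obtain ⟨v, hv, hwv⟩ := P.infl_ub z.1 y w.1 hwz hwy
      exact hwF v ⟨y, hy, hv⟩ hwv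
  | univ => exact ⟨∅, by simp, Set.subset_univ _⟩
  | inter s t _ _ ihs iht =>
    obtain ⟨F₁, hF₁, hs⟩ := ihs hz.1
    obtain ⟨F₂, hF₂, ht⟩ := iht hz.2
    refine ⟨F₁ ∪ F₂, fun v hv => (Finset.mem_union.1 hv).elim (hF₁ v) (hF₂ v), ?_⟩
    rw [Finset.set_biUnion_union]
    exact fun w ⟨hwz, hwF⟩ =>
      ⟨hs ⟨hwz, fun h => hwF (Or.inl h)⟩, ht ⟨hwz, fun h => hwF (Or.inr h)⟩⟩
  | sUnion S _ ih =>
    obtain ⟨t, ht, hzt⟩ := hz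
    obtain ⟨F, hF, hsub⟩ := ih t ht hzt
    exact ⟨F, hF, hsub.trans (Set.subset_sUnion_of_mem ht)⟩

lemma exists_ne_mem_of_lt_level {U : Set P.space} (hU : IsOpen U) {z : P.space} (hz : z ∈ U)
    {α : Ordinal.{0}} (hα : α < z.1.1) : ∃ w ∈ U, w ≠ z ∧ α ≤ w.1.1 := by
  obtain ⟨F, hF, hsub⟩ := exists_cone_diff_subset hU hz
  set β := max (F.sup Prod.fst) α
  have hβ : β < z.1.1 := by
    refine max_lt ((Finset.sup_lt_iff (bot_le.trans_lt hα)).2 fun v hv => ?_) hα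
    exact P.pi_lt v z.1 (hF v hv).1 (hF v hv).2
  obtain ⟨s, ⟨hsβ, hsA, hsz, hsne⟩, hsF⟩ :=
    ((P.many_below β _ hβ z.2.1 z.1 rfl z.2.2).sdiff F.finite_toSet).nonempty
  have hsU : (⟨s, hsβ ▸ hβ.trans z.2.1, hsA⟩ : P.space) ∈ U := by
    refine hsub ⟨hsz, fun hmem => ?_⟩
    obtain ⟨v, hv, hsv⟩ := Set.mem_iUnion₂.1 hmem
    have hs_eq : s = v :=
      eq_of_le_of_fst_le hsv ((le_max_of_le_left (Finset.le_sup hv)).trans_eq hsβ.symm)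
    exact hsF (hs_eq ▸ hv)
  exact ⟨_, hsU, fun h => hsne (congrArg Subtype.val h), (le_max_right _ _).trans_eq hsβ.symm⟩

lemma exists_isOpen_inter_eq_singleton_iff {α : Ordinal.{0}} {z : P.space} (hz : α ≤ z.1.1) :
    (∃ U, IsOpen U ∧ U ∩ {w : P.space | α ≤ w.1.1} = {z}) ↔ z.1.1 = α := by
  refine ⟨fun ⟨U, hU, hUz⟩ => ?_, fun h => ⟨_, isOpen_cone z, ?_⟩⟩
  · by_contra hne
    have hzU : z ∈ U := ((Set.ext_iff.1 hUz z).2 rfl).1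
    obtain ⟨w, hwU, hwz, hαw⟩ := exists_ne_mem_of_lt_level hU hzU (hz.lt_of_ne (Ne.symm hne))
    exact hwz (hUz.subset ⟨hwU, hαw⟩)
  · exact cone_inter_eq_singleton hz fun w hw => h.trans_le hw

theorem exists_isOpen_inter_eq_singleton {S : Set P.space} (hS : S.Nonempty) :
    ∃ x ∈ S, ∃ U, IsOpen U ∧ U ∩ S = {x} := by
  obtain ⟨x, hx, hmin⟩ := (InvImage.wf (fun z : P.space => z.1.1) Ordinal.lt_wf).has_min S hS
  exact ⟨x, hx, _, isOpen_cone x, cone_inter_eq_singleton hx fun w hw => not_lt.1 (hmin w hw)⟩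

theorem cbLevel_eq {α : Ordinal.{0}} (hα : α < δ) : CBLevel P.space α = {z | z.1.1 = α} := by
  induction α using WellFoundedLT.induction with
  | _ α ih =>
  have hlower : (⋃ β : Set.Iio α, CBLevel P.space β.1) = {z | z.1.1 < α} := by
    ext z
    simp only [Set.mem_iUnion, Set.mem_ofPred_eq]
    constructor
    · rintro ⟨⟨β, hβ⟩, hz⟩
      rw [ih β hβ (hβ.trans hα)] at hz
      exact hz ▸ hβ
    · exact fun h => ⟨⟨z.1.1, h⟩, by rw [ih _ h (h.trans hα)]; rfl⟩
  have hupper : {z : P.space | z.1.1 < α}ᶜ = {z | α ≤ z.1.1} := by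
    ext; simp
  rw [CBLevel, hlower, hupper]
  ext z
  by_cases hz : α ≤ z.1.1
  · simp only [Set.mem_ofPred_eq, not_lt.2 hz, not_false_eq_true, true_and,
      exists_isOpen_inter_eq_singleton_iff hz]
  · simp only [Set.mem_ofPred_eq, not_le.1 hz, not_true_eq_false, false_and, (not_le.1 hz).ne]

end LCSPoset

/-- The space associated with an LCS poset of height `δ` is scattered and its
`α`-th Cantor–Bendixson level is exactly `T_α`, for every `α < δ`. -/
theorem LCSPoset.scattered_and_levels {δ : Ordinal.{0}} (P : LCSPoset δ) :
    (∀ S : Set P.space, S.Nonempty →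
      ∃ x ∈ S, ∃ U : Set P.space, @IsOpen P.space P.topology U ∧ U ∩ S = {x}) ∧
    (∀ α, α < δ → @CBLevel P.space P.topology α = {z : P.space | z.1.1 = α}) :=
  ⟨fun _ => P.exists_isOpen_inter_eq_singleton, fun _ => P.cbLevel_eq⟩
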